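/- arXiv:1701.06800 — 3 statements merged into one kernel-verified Lean document; each statement's English description precedes it below -/
import Mathlib

section
/- Under any oblivious message adversary whose graphs are all directed rooted trees on n nodes, dissemination completes within O(n log n) rounds; concretely, the dissemination time is at most ∑_{i=1}^{n} ⌈n/i⌉. -/
/-- Influence sets: `influence G p r` is the set of processes that know
about `p` at the end of round `r`, where `G r` is the round-`r`
communication graph (edges `G r q q'` mean `q` sends to `q'`). -/
def influence {n : ℕ} (G : ℕ → Fin n → Fin n → Prop) (p : Fin n) : ℕ → Set (Fin n)
  | 0 => {p}
  | r + 1 => influence G p r ∪ {q' | ∃ q ∈ influence G p r, G (r + 1) q q'}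

/-- `E` is a directed tree on `Fin n` rooted at `root`, edges oriented away
from the root: every node is reachable from the root, every non-root node
has a unique parent, and the root has no parent. -/
def IsRootedTree {n : ℕ} (E : Fin n → Fin n → Prop) (root : Fin n) : Prop :=
  (∀ v, Relation.ReflTransGen E root v) ∧
  (∀ v, v ≠ root → ∃! u, E u v) ∧
  (∀ u, ¬ E u root)

/-- A leaf of a directed graph: a node with no outgoing edge. -/
def IsLeaf {n : ℕ} (E : Fin n → Fin n → Prop) (v : Fin n) : Prop := ∀ w, ¬ E v w

/-- The successor relation of the chain `σ 0 → σ 1 → ⋯ → σ (n-1)`. -/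
def chainEdge {n : ℕ} (σ : Fin n ≃ Fin n) (u v : Fin n) : Prop :=
  ∃ i j : Fin n, (j : ℕ) = (i : ℕ) + 1 ∧ u = σ i ∧ v = σ j

/-- `E` is a directed chain (rooted path) on all `n` nodes. -/
def IsDirChain {n : ℕ} (E : Fin n → Fin n → Prop) : Prop :=
  ∃ σ : Fin n ≃ Fin n, ∀ u v, E u v ↔ chainEdge σ u v

/-- `E` is an undirected path on all `n` nodes (messages traverse edges in
both directions). -/
def IsUndirPath {n : ℕ} (E : Fin n → Fin n → Prop) : Prop :=
  ∃ σ : Fin n ≃ Fin n, ∀ u v, E u v ↔ (chainEdge σ u v ∨ chainEdge σ v u)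

/-- The influence sets indexed by `I` cover `Π` at time `r`. -/
def isCovering {n : ℕ} (G : ℕ → Fin n → Fin n → Prop) (I : Set (Fin n)) (r : ℕ) : Prop :=
  ⋃ p ∈ I, influence G p r = Set.univ

/-- A strict covering: no member can be removed. -/
def isStrictCovering {n : ℕ} (G : ℕ → Fin n → Fin n → Prop) (I : Set (Fin n)) (r : ℕ) : Prop :=
  isCovering G I r ∧ ∀ p ∈ I, ¬ isCovering G (I \ {p}) r

/-!
Keep a covering `I` of `Π` (every process is influenced by some member of `I`) and the *unique
nodes* of each `q ∈ I`, those influenced by `q` alone; unique nodes never reappear. While every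
member has a unique node, the root of the round's tree is a unique node of at most one member, and
for each other member `q` some tree edge enters the unique nodes of `q` from outside, so its head
becomes influenced by a second member. Hence with `x + 1` members the number of unique nodes, at
most `n`, drops by at least `x` per round, and after `⌈n/x⌉` rounds some member has none left and
can be dropped. Shrinking the covering by all `n` processes to a single process thus takes at most
`∑_{x=1}^{n-1} ⌈n/x⌉` rounds.
-/

def IsRooted {α : Type*} (E : α → α → Prop) : Prop :=
  ∃ root, ∀ v, Relation.ReflTransGen E root v

lemma IsRootedTree.isRooted {n : ℕ} {E : Fin n → Fin n → Prop} {root : Fin n}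
    (h : IsRootedTree E root) : IsRooted E :=
  ⟨root, h.1⟩

lemma Relation.ReflTransGen.exists_rel_notMem_mem {α : Type*} {r : α → α → Prop} {S : Set α}
    {a b : α} (h : Relation.ReflTransGen r a b) (ha : a ∉ S) (hb : b ∈ S) :
    ∃ u w, r u w ∧ u ∉ S ∧ w ∈ S := by
  induction h with
  | refl => exact absurd hb ha
  | @tail c _ _ hcd ih =>
    by_cases hc : c ∈ S
    · exact ih hc
    · exact ⟨c, _, hcd, hc, hb⟩

section

variable {n : ℕ} (G : ℕ → Fin n → Fin n → Prop)

lemma influence_mono (p : Fin n) : Monotone (influence G p) :=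
  monotone_nat_of_le_succ fun _ => Set.subset_union_left

lemma influence_eq_univ_mono {p : Fin n} {t t' : ℕ} (h : influence G p t = Set.univ)
    (ht : t ≤ t') : influence G p t' = Set.univ :=
  Set.eq_univ_of_univ_subset (h ▸ influence_mono G p ht)

lemma mem_influence_succ {p u w : Fin n} {t : ℕ} (hu : u ∈ influence G p t)
    (huw : G (t + 1) u w) : w ∈ influence G p (t + 1) :=
  Or.inr ⟨u, hu, huw⟩

variable {G}

lemma isCovering_iff {I : Set (Fin n)} {t : ℕ} :
    isCovering G I t ↔ ∀ v, ∃ p ∈ I, v ∈ influence G p t := by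
  simp [isCovering, Set.eq_univ_iff_forall]

lemma isCovering.mono {I : Set (Fin n)} {t t' : ℕ} (hc : isCovering G I t) (ht : t ≤ t') :
    isCovering G I t' :=
  isCovering_iff.2 fun v =>
    (isCovering_iff.1 hc v).imp fun p ⟨hp, hv⟩ => ⟨hp, influence_mono G p ht hv⟩

variable (G) in
lemma isCovering_univ_zero : isCovering G Set.univ 0 :=
  isCovering_iff.2 fun v => ⟨v, Set.mem_univ v, rfl⟩

lemma isCovering_singleton_iff {p : Fin n} {t : ℕ} :
    isCovering G {p} t ↔ influence G p t = Set.univ := by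
  simp [isCovering]

variable (G) in
def uniqueNodes (I : Finset (Fin n)) (q : Fin n) (t : ℕ) : Set (Fin n) :=
  influence G q t \ ⋃ p ∈ I.erase q, influence G p t

variable {I : Finset (Fin n)} {q : Fin n} {t : ℕ}

lemma exists_mem_erase_of_notMem_uniqueNodes (hc : isCovering G I t) {v : Fin n}
    (hv : v ∉ uniqueNodes G I q t) : ∃ p ∈ I.erase q, v ∈ influence G p t := by
  obtain ⟨p, hp, hvp⟩ := isCovering_iff.1 hc v
  by_cases hpq : p = q
  · subst hpq
    obtain ⟨p', hp', hvp'⟩ := Set.mem_iUnion₂.1 (not_not.1 fun h => hv ⟨hvp, h⟩)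
    exact ⟨p', hp', hvp'⟩
  · exact ⟨p, Finset.mem_erase.2 ⟨hpq, hp⟩, hvp⟩

lemma isCovering_erase_of_uniqueNodes_eq_empty (hc : isCovering G I t)
    (h : uniqueNodes G I q t = ∅) : isCovering G ↑(I.erase q) t :=
  isCovering_iff.2 fun v =>
    exists_mem_erase_of_notMem_uniqueNodes hc (h ▸ Set.notMem_empty v)

lemma uniqueNodes_succ_subset (hc : isCovering G I t) :
    uniqueNodes G I q (t + 1) ⊆ uniqueNodes G I q t := by
  intro v ⟨hvq, hv⟩
  by_contra hv'
  obtain ⟨p, hp, hvp⟩ := exists_mem_erase_of_notMem_uniqueNodes hc hv'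
  exact hv (Set.mem_iUnion₂.2 ⟨p, hp, influence_mono G p t.le_succ hvp⟩)

lemma uniqueNodes_succ_ssubset {ρ : Fin n} (hc : isCovering G I t)
    (hroot : ∀ v, Relation.ReflTransGen (G (t + 1)) ρ v) (hne : (uniqueNodes G I q t).Nonempty)
    (hρ : ρ ∉ uniqueNodes G I q t) : uniqueNodes G I q (t + 1) ⊂ uniqueNodes G I q t := by
  obtain ⟨v, hv⟩ := hne
  obtain ⟨u, w, huw, hu, hw⟩ := (hroot v).exists_rel_notMem_mem hρ hv
  obtain ⟨p, hp, hup⟩ := exists_mem_erase_of_notMem_uniqueNodes hc hu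
  refine (Set.ssubset_iff_of_subset (uniqueNodes_succ_subset hc)).2 ⟨w, hw, fun hw' => ?_⟩
  exact hw'.2 (Set.mem_iUnion₂.2 ⟨p, hp, mem_influence_succ G hup huw⟩)

variable (G I t) in
lemma pairwiseDisjoint_uniqueNodes :
    (I : Set (Fin n)).PairwiseDisjoint fun q => uniqueNodes G I q t := by
  intro q _ q' hq' hqq'
  exact Set.disjoint_left.2 fun v hv hv' =>
    hv.2 (Set.mem_iUnion₂.2 ⟨q', Finset.mem_erase.2 ⟨Ne.symm hqq', hq'⟩, hv'.1⟩)

variable (G I t) in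
lemma sum_ncard_uniqueNodes_le : ∑ q ∈ I, (uniqueNodes G I q t).ncard ≤ n := by
  calc ∑ q ∈ I, (uniqueNodes G I q t).ncard
      = (⋃ q ∈ (I : Set (Fin n)), uniqueNodes G I q t).ncard := by
        rw [I.finite_toSet.ncard_biUnion (fun _ _ => Set.toFinite _)
          (pairwiseDisjoint_uniqueNodes G I t), finsum_mem_coe_finset]
    _ ≤ n := (Set.ncard_le_card _).trans (by simp)

lemma sum_ncard_uniqueNodes_succ_add_le {ρ : Fin n} (hc : isCovering G I t)
    (hroot : ∀ v, Relation.ReflTransGen (G (t + 1)) ρ v)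
    (hne : ∀ q ∈ I, (uniqueNodes G I q t).Nonempty) :
    ∑ q ∈ I, (uniqueNodes G I q (t + 1)).ncard + (I.card - 1) ≤
      ∑ q ∈ I, (uniqueNodes G I q t).ncard := by
  classical
  have hstep : ∀ q ∈ I, (uniqueNodes G I q (t + 1)).ncard
      + (if ρ ∉ uniqueNodes G I q t then 1 else 0) ≤ (uniqueNodes G I q t).ncard := by
    intro q hq
    split_ifs with hρ
    · exact Set.ncard_le_ncard (uniqueNodes_succ_subset hc)
    · exact Set.ncard_lt_ncard (uniqueNodes_succ_ssubset hc hroot (hne q hq) hρ)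
  have hroot_unique : (I.filter fun q => ρ ∈ uniqueNodes G I q t).card ≤ 1 :=
    Finset.card_le_one.2 fun a ha b hb => by
      by_contra hab
      rw [Finset.mem_filter] at ha hb
      exact Set.disjoint_left.1 (pairwiseDisjoint_uniqueNodes G I t ha.1 hb.1 hab) ha.2 hb.2
  have hsplit := I.card_filter_add_card_filter_not fun q => ρ ∈ uniqueNodes G I q t
  calc ∑ q ∈ I, (uniqueNodes G I q (t + 1)).ncard + (I.card - 1)
      ≤ ∑ q ∈ I, (uniqueNodes G I q (t + 1)).ncard
        + (I.filter fun q => ρ ∉ uniqueNodes G I q t).card := by omega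
    _ = ∑ q ∈ I, ((uniqueNodes G I q (t + 1)).ncard
        + if ρ ∉ uniqueNodes G I q t then 1 else 0) := by
        rw [Finset.sum_add_distrib, Finset.card_filter]
    _ ≤ ∑ q ∈ I, (uniqueNodes G I q t).ncard := Finset.sum_le_sum hstep

lemma sum_ncard_uniqueNodes_add_mul_le {r : ℕ} (hc : isCovering G I r)
    (hrooted : ∀ s, IsRooted (G (s + 1))) :
    ∀ k, (∀ j < k, ∀ q ∈ I, (uniqueNodes G I q (r + j)).Nonempty) →
      ∑ q ∈ I, (uniqueNodes G I q (r + k)).ncard + (I.card - 1) * k ≤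
        ∑ q ∈ I, (uniqueNodes G I q r).ncard
  | 0, _ => by simp
  | k + 1, hne => by
    obtain ⟨ρ, hρ⟩ := hrooted (r + k)
    have hstep := sum_ncard_uniqueNodes_succ_add_le (hc.mono (r.le_add_right k)) hρ
      (hne k k.lt_succ_self)
    have hprev := sum_ncard_uniqueNodes_add_mul_le hc hrooted k fun j hj => hne j (by omega)
    rw [← add_assoc, Nat.mul_succ]
    omega

lemma exists_isCovering_erase {r x : ℕ} (hx : 0 < x) (hcard : I.card = x + 1)
    (hc : isCovering G I r) (hrooted : ∀ s, IsRooted (G (s + 1))) :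
    ∃ t ≤ r + n ⌈/⌉ x, ∃ q ∈ I, isCovering G ↑(I.erase q) t := by
  by_contra! hcon
  have hne : ∀ j ≤ n ⌈/⌉ x, ∀ q ∈ I, (uniqueNodes G I q (r + j)).Nonempty :=
    fun j hj q hq => Set.nonempty_iff_ne_empty.2 fun h => hcon (r + j) (by omega) q hq
      (isCovering_erase_of_uniqueNodes_eq_empty (hc.mono (r.le_add_right j)) h)
  have hdecay := sum_ncard_uniqueNodes_add_mul_le hc hrooted (n ⌈/⌉ x)
    fun j hj => hne j hj.le
  have hleft : x + 1 ≤ ∑ q ∈ I, (uniqueNodes G I q (r + n ⌈/⌉ x)).ncard := by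
    rw [← hcard, Finset.card_eq_sum_ones]
    exact Finset.sum_le_sum fun q hq =>
      (Set.ncard_pos (Set.toFinite _)).2 (hne _ le_rfl q hq)
  have hright := sum_ncard_uniqueNodes_le G I r
  have hceil : n ≤ x * (n ⌈/⌉ x) := le_smul_ceilDiv hx
  rw [hcard, Nat.add_sub_cancel] at hdecay
  linarith

lemma exists_influence_eq_univ_of_isCovering (hrooted : ∀ s, IsRooted (G (s + 1))) (x : ℕ) :
    ∀ r (I : Finset (Fin n)), I.card = x + 1 → isCovering G ↑I r →
      ∃ p, influence G p (r + ∑ i ∈ Finset.Icc 1 x, n ⌈/⌉ i) = Set.univ := by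
  induction x with
  | zero =>
    intro r I hcard hc
    obtain ⟨p, rfl⟩ := Finset.card_eq_one.1 hcard
    exact ⟨p, by simpa [isCovering_singleton_iff] using hc⟩
  | succ x ih =>
    intro r I hcard hc
    obtain ⟨t, ht, q, hq, hc'⟩ := exists_isCovering_erase (by omega : 0 < x + 1) hcard hc hrooted
    obtain ⟨p, hp⟩ := ih t (I.erase q) (by rw [Finset.card_erase_of_mem hq, hcard]; rfl) hc'
    refine ⟨p, influence_eq_univ_mono G hp ?_⟩
    rw [Finset.sum_Icc_succ_top (by omega)]
    omega

end

/-- under an oblivious message adversary whose graphs are all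
rooted trees on `n` nodes, dissemination completes within
`∑_{i=1}^{n} ⌈n/i⌉` rounds (which is `O(n log n)`). -/
theorem dissemination_rooted_trees_nlogn {n : ℕ}
    (G : ℕ → Fin n → Fin n → Prop)
    (htree : ∀ r, 1 ≤ r → ∃ root, IsRootedTree (G r) root) :
    ∃ p : Fin n,
      influence G p (∑ i ∈ Finset.Icc 1 n, (n + i - 1) / i) = Set.univ := by
  obtain ⟨root, -⟩ := htree 1 le_rfl
  have hrooted : ∀ s, IsRooted (G (s + 1)) := fun s => by
    obtain ⟨_, h⟩ := htree (s + 1) s.succ_pos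
    exact h.isRooted
  obtain ⟨p, hp⟩ := exists_influence_eq_univ_of_isCovering hrooted (n - 1) 0 Finset.univ
    (by rw [Finset.card_univ, Fintype.card_fin]; have := root.pos; omega)
    (by simpa using isCovering_univ_zero G)
  refine ⟨p, influence_eq_univ_mono G hp ?_⟩
  rw [zero_add]
  exact Finset.sum_le_sum_of_subset (Finset.Icc_subset_Icc_right (n.sub_le 1))
end

section
/- For the class of directed rooted trees with exactly ℓ leaves on n nodes, the dissemination time is at most (n-ℓ)(n-1) + 2 − max(n, 2(n-ℓ)). In particular, for trees with exactly k inner nodes (n−k leaves), the dissemination time is at most k(n-1) + 2 − max(n, 2k), which is linear in n for fixed k. -/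
lemma influence_self {n : ℕ} (G : ℕ → Fin n → Fin n → Prop) (p : Fin n) :
    ∀ r, p ∈ influence G p r
  | 0 => rfl
  | r + 1 => Or.inl (influence_self G p r)

lemma influence_mono_s15 {n : ℕ} (G : ℕ → Fin n → Fin n → Prop) (p : Fin n) {r s : ℕ}
    (h : r ≤ s) : influence G p r ⊆ influence G p s := by
  induction s with
  | zero => simp [Nat.le_zero.mp h]
  | succ s ih =>
    rcases Nat.lt_or_ge r (s + 1) with h1 | h1
    · exact fun x hx => Or.inl (ih (Nat.lt_succ_iff.mp h1) hx)
    · have : r = s + 1 := le_antisymm h h1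
      subst this; exact Set.Subset.rfl

lemma tree_no_self {n : ℕ} {E : Fin n → Fin n → Prop} {root : Fin n}
    (h : IsRootedTree E root) (v : Fin n) : ¬ E v v := by
  intro hvv
  have hvroot : v ≠ root := fun he => h.2.2 v (he ▸ hvv)
  have key : ∀ x, Relation.ReflTransGen E root x → x ≠ v := by
    intro x hx
    induction hx with
    | refl => exact Ne.symm hvroot
    | @tail b c hb hbc ih =>
      intro hcv
      exact ih ((h.2.1 v hvroot).unique (hcv ▸ hbc) hvv)
  exact key v (h.1 v) rfl

lemma tree_has_leaf {n : ℕ} {E : Fin n → Fin n → Prop} {root : Fin n}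
    (h : IsRootedTree E root) : ∃ v, IsLeaf E v := by
  by_contra hc
  push_neg at hc
  have hc' : ∀ v, ∃ w, E v w := by
    intro v
    have := hc v
    simp only [IsLeaf, not_forall, not_not] at this
    exact this
  choose c hcE using hc'
  have hinj : Function.Injective c := by
    intro u v huv
    have h1 : c u ≠ root := fun he => h.2.2 u (he ▸ hcE u)
    exact (h.2.1 (c u) h1).unique (hcE u) (huv ▸ hcE v)
  have hsurj : Function.Surjective c := Finite.surjective_of_injective hinj
  obtain ⟨v, hv⟩ := hsurj root
  exact h.2.2 v (hv ▸ hcE v)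

lemma tree_cross {n : ℕ} {E : Fin n → Fin n → Prop} {root : Fin n}
    (h : IsRootedTree E root) {S : Set (Fin n)} (hroot : root ∈ S)
    (hne : S ≠ Set.univ) : ∃ u ∈ S, ∃ w, w ∉ S ∧ E u w := by
  have key : ∀ x, Relation.ReflTransGen E root x →
      x ∈ S ∨ ∃ u ∈ S, ∃ w, w ∉ S ∧ E u w := by
    intro x hx
    induction hx with
    | refl => exact Or.inl hroot
    | @tail b c hb hbc ih =>
      rcases ih with h1 | h2
      · by_cases hcS : c ∈ S
        · exact Or.inl hcS
        · exact Or.inr ⟨b, h1, c, hcS, hbc⟩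
      · exact Or.inr h2
  obtain ⟨v, hv⟩ : ∃ v, v ∉ S := by
    by_contra hv
    push_neg at hv
    exact hne (Set.eq_univ_of_forall hv)
  rcases key v (h.1 v) with h1 | h2
  · exact absurd h1 hv
  · exact h2

/-- for rooted trees with exactly `ℓ` leaves on `n` nodes,
dissemination completes within `(n-ℓ)(n-1) + 2 - max n (2(n-ℓ))` rounds;
with `k = n - ℓ` inner nodes this is `k(n-1) + 2 - max n (2k)`, linear in
`n` for fixed `k`. -/
theorem dissemination_trees_ell_leaves {n ℓ : ℕ}
    (G : ℕ → Fin n → Fin n → Prop)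
    (htree : ∀ r, 1 ≤ r → ∃ root, IsRootedTree (G r) root ∧
      {v | IsLeaf (G r) v}.ncard = ℓ) :
    ∃ p : Fin n,
      influence G p ((n - ℓ) * (n - 1) + 2 - max n (2 * (n - ℓ))) = Set.univ := by
  classical
  obtain ⟨root1, htree1, hL1⟩ := htree 1 le_rfl
  have hn1 : 1 ≤ n := root1.pos
  rcases eq_or_lt_of_le hn1 with hn | hn2
  · -- n = 1 : influence always contains p and Fin 1 is a singleton
    refine ⟨root1, Set.eq_univ_of_forall fun q => ?_⟩
    have hq : q = root1 := Fin.ext (by omega)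
    rw [hq]
    exact influence_self G root1 _
  -- now n ≥ 2
  set k := n - ℓ with hk
  set L : Set (Fin n) := {v | IsLeaf (G 1) v} with hLdef
  -- root is not a leaf
  obtain ⟨v0, hv0⟩ : ∃ v : Fin n, v ≠ root1 :=
    Fintype.exists_ne_of_one_lt_card (by simpa using hn2) root1
  have hrootleaf : ¬ IsLeaf (G 1) root1 := by
    rcases (htree1.1 v0).cases_head with he | ⟨c, hc, -⟩
    · exact absurd he.symm hv0
    · exact fun hl => hl c hc
  set I : Finset (Fin n) := Finset.univ.filter (fun p => ¬ IsLeaf (G 1) p) with hI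
  have hrootI : root1 ∈ I := by simp [hI, hrootleaf]
  -- card of leaves as a finset
  have hLcard : (Finset.univ.filter (fun v => IsLeaf (G 1) v)).card = ℓ := by
    rw [← hL1]
    rw [Set.ncard_eq_toFinset_card']
    congr 1
    ext v
    simp [hLdef]
  have hIcard : I.card = k := by
    have := Finset.card_filter_add_card_filter_not
      (s := (Finset.univ : Finset (Fin n))) (p := fun v => IsLeaf (G 1) v)
    simp only [Finset.card_univ, Fintype.card_fin] at this
    have hln : ℓ ≤ n := by omega
    rw [hI]
    omega
  have hk1 : 1 ≤ k := by
    have : 0 < I.card := Finset.card_pos.mpr ⟨root1, hrootI⟩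
    omega
  have hl1 : 1 ≤ ℓ := by
    obtain ⟨w, hw⟩ := tree_has_leaf htree1
    have : 0 < (Finset.univ.filter (fun v => IsLeaf (G 1) v)).card :=
      Finset.card_pos.mpr ⟨w, by simpa using hw⟩
    omega
  have hln : ℓ ≤ n := by
    have := Finset.card_filter_le (Finset.univ : Finset (Fin n))
      (fun v => IsLeaf (G 1) v)
    simpa [hLcard] using this
  -- covering at time 1
  have hcov1 : ∀ v : Fin n, ∃ p ∈ I, v ∈ influence G p 1 := by
    intro v
    by_cases hv : IsLeaf (G 1) v
    · have hvroot : v ≠ root1 := fun he => hrootleaf (he ▸ hv)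
      obtain ⟨u, hu, -⟩ := htree1.2.1 v hvroot
      refine ⟨u, ?_, Or.inr ⟨u, influence_self G u 0, hu⟩⟩
      simp only [hI, Finset.mem_filter, Finset.mem_univ, true_and]
      exact fun hl => hl v hu
    · exact ⟨v, by simp [hI, hv], influence_self G v 1⟩
  have hcov : ∀ r, 1 ≤ r → ∀ v : Fin n, ∃ p ∈ I, v ∈ influence G p r := by
    intro r hr v
    obtain ⟨p, hp, hv⟩ := hcov1 v
    exact ⟨p, hp, influence_mono_s15 G p hr hv⟩
  -- at time 1, each inner node's influence set has size ≥ 2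
  have h2 : ∀ p ∈ I, 2 ≤ (influence G p 1).ncard := by
    intro p hp
    simp only [hI, Finset.mem_filter, Finset.mem_univ, true_and] at hp
    obtain ⟨w, hw⟩ : ∃ w, G 1 p w := by
      simpa [IsLeaf, not_forall] using hp
    have hpw : p ≠ w := fun he => tree_no_self htree1 p (he ▸ hw)
    have hsub : ({p, w} : Set (Fin n)) ⊆ influence G p 1 := by
      intro x hx
      simp only [Set.mem_insert_iff, Set.mem_singleton_iff] at hx
      rcases hx with h | h
      · rw [h]; exact influence_self G p 1
      · rw [h]; exact Or.inr ⟨p, influence_self G p 0, hw⟩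
    calc 2 = ({p, w} : Set (Fin n)).ncard := (Set.ncard_pair hpw).symm
      _ ≤ (influence G p 1).ncard := Set.ncard_le_ncard hsub (Set.toFinite _)
  set M := max n (2 * k) with hM
  set T := k * (n - 1) + 2 - M with hT
  have hMle : M ≤ k * (n - 1) + 1 := by
    have h1 : n - 1 ≤ k * (n - 1) := Nat.le_mul_of_pos_left _ hk1
    rcases le_or_gt 3 n with h3 | h3
    · have h2' : k * 2 ≤ k * (n - 1) := Nat.mul_le_mul_left k (by omega)
      rw [hM]
      apply max_le <;> omega
    · -- n = 2, so k ≤ 1, hence k = 1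
      have hkn : k ≤ n - 1 := by omega
      have hk2 : k = 1 := by omega
      have hn2' : n = 2 := by omega
      rw [hM, hk2, hn2']
      norm_num
  have hT1 : 1 ≤ T := by
    obtain ⟨A, hA⟩ : ∃ A, k * (n - 1) = A := ⟨_, rfl⟩
    rw [hA] at hMle hT
    omega
  by_contra hcon
  push_neg at hcon
  have hne : ∀ p (r : ℕ), r ≤ T → influence G p r ≠ Set.univ := by
    intro p r hr he
    exact hcon p (Set.eq_univ_of_univ_subset (he ▸ influence_mono_s15 G p hr))
  set S : ℕ → ℕ := fun r => ∑ p ∈ I, (influence G p r).ncard with hS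
  have hbase : M ≤ S 1 := by
    simp only [hS]
    have hcb : (Finset.univ : Finset (Fin n)) ⊆
        I.biUnion (fun p => (influence G p 1).toFinset) := by
      intro v _
      obtain ⟨p, hp, hv⟩ := hcov1 v
      exact Finset.mem_biUnion.mpr ⟨p, hp, Set.mem_toFinset.mpr hv⟩
    have hnle : n ≤ ∑ p ∈ I, (influence G p 1).ncard := by
      have := (Finset.card_le_card hcb).trans (Finset.card_biUnion_le)
      simp only [Finset.card_univ, Fintype.card_fin] at this
      calc n ≤ ∑ p ∈ I, (influence G p 1).toFinset.card := this
        _ = ∑ p ∈ I, (influence G p 1).ncard := by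
          apply Finset.sum_congr rfl
          intro p _
          rw [Set.ncard_eq_toFinset_card']
    have h2k : 2 * k ≤ ∑ p ∈ I, (influence G p 1).ncard := by
      have := Finset.card_nsmul_le_sum I (fun p => (influence G p 1).ncard) 2 h2
      rw [hIcard, smul_eq_mul] at this
      omega
    rw [hM]
    exact max_le hnle h2k
  have hstep : ∀ r, 1 ≤ r → r + 1 ≤ T → S r < S (r + 1) := by
    intro r hr hrT
    obtain ⟨rt, htr, -⟩ := htree (r + 1) (by omega)
    obtain ⟨p, hp, hroot⟩ := hcov r hr rt
    have hneu : influence G p r ≠ Set.univ := hne p r (by omega)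
    obtain ⟨u, hu, w, hw, hE⟩ := tree_cross htr hroot hneu
    have hw1 : w ∈ influence G p (r + 1) := Or.inr ⟨u, hu, hE⟩
    have hsub : influence G p r ⊆ influence G p (r + 1) :=
      influence_mono_s15 G p (Nat.le_succ r)
    have hlt : (influence G p r).ncard < (influence G p (r + 1)).ncard := by
      apply Set.ncard_lt_ncard _ (Set.toFinite _)
      exact (Set.ssubset_iff_of_subset hsub).mpr ⟨w, hw1, hw⟩
    simp only [hS]
    exact Finset.sum_lt_sum
      (fun i _ => Set.ncard_le_ncard (influence_mono_s15 G i (Nat.le_succ r)) (Set.toFinite _))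
      ⟨p, hp, hlt⟩
  have hind : ∀ t, 1 + t ≤ T → M + t ≤ S (1 + t) := by
    intro t
    induction t with
    | zero => intro _; simpa using hbase
    | succ t ih =>
      intro h
      have h1 := ih (by omega)
      have h2' := hstep (1 + t) (by omega) (by omega)
      have he : 1 + (t + 1) = (1 + t) + 1 := by omega
      rw [he]
      omega
  have hcap : S T ≤ k * (n - 1) := by
    have hb : ∀ p ∈ I, (influence G p T).ncard ≤ n - 1 := by
      intro p _
      have hlt := Set.ncard_lt_ncard
        (Set.ssubset_univ_iff.mpr (hne p T le_rfl)) (Set.toFinite _)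
      rw [Set.ncard_univ] at hlt
      simp only [Nat.card_eq_fintype_card, Fintype.card_fin] at hlt
      omega
    simp only [hS]
    calc (∑ p ∈ I, (influence G p T).ncard) ≤ ∑ _p ∈ I, (n - 1) := Finset.sum_le_sum hb
      _ = I.card * (n - 1) := by rw [Finset.sum_const, smul_eq_mul]
      _ = k * (n - 1) := by rw [hIcard]
  have hfin := hind (T - 1) (by omega)
  rw [show 1 + (T - 1) = T from by omega] at hfin
  obtain ⟨A, hA⟩ : ∃ A, k * (n - 1) = A := ⟨_, rfl⟩
  rw [hA] at hcap hMle hT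
  omega
end

section
/- For any sequence of undirected paths on n nodes, at the end of each round r ≤ (n−1)/2 there exist n−2r influence sets S_{p_1}(r),...,S_{p_{n−2r}}(r) such that each has size at least 2r+1 and for every nonempty I ⊆ {1,...,n−2r}, |⋃_{i∈I} S_{p_i}(r)| ≥ 2r + |I|. -/
/-!
Induction on `r`, keeping a set `K` of `n - 2r` processes in which every nonempty `J ⊆ K`
influences at least `|J| + 2r` processes (surplus `2r`). In one round along a path, the joint
influence set of `J` grows by at least two unless it already is everything or an initial or final
segment of the path. Call `J` tight if its surplus is exactly `2r`: a tight `J` absorbs every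
`J' ⊆ K` whose influence set lies inside its own, so the tight sets whose influence set is an
initial segment form a chain, and so do those ending in a final segment. Removing from `K` a
process of the least tight initial-segment set and a different one of the least tight
final-segment set leaves `n - 2(r+1)` processes with surplus `2(r+1)`.
-/

open Finset

theorem Nat.exists_not_and_succ_of_le {P : ℕ → Prop} {a b : ℕ} (hab : a ≤ b) (ha : ¬ P a)
    (hb : P b) : ∃ z, a ≤ z ∧ z < b ∧ ¬ P z ∧ P (z + 1) := by
  induction b, hab using Nat.le_induction with
  | base => exact absurd hb ha
  | succ b hab ih =>
    by_cases hPb : P b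
    · obtain ⟨z, haz, hzb, hz⟩ := ih hPb
      exact ⟨z, haz, by omega, hz⟩
    · exact ⟨b, hab, by omega, hPb, hb⟩

theorem Finset.card_add_two_le {α : Type*} [DecidableEq α] {s t : Finset α} (hst : s ⊆ t)
    {x y : α} (hx : x ∈ t \ s) (hy : y ∈ t \ s) (hxy : x ≠ y) : #s + 2 ≤ #t := by
  have hpair : #{x, y} ≤ #(t \ s) := card_le_card (insert_subset hx (singleton_subset_iff.2 hy))
  rw [card_pair hxy, card_sdiff_of_subset hst] at hpair
  have := card_le_card hst
  omega

theorem Finset.exists_ne_of_two_le_card_union {α : Type*} [DecidableEq α] {s t : Finset α}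
    (hs : s.Nonempty) (ht : t.Nonempty) (h : 2 ≤ #(s ∪ t)) : ∃ a ∈ s, ∃ b ∈ t, a ≠ b := by
  by_contra! hcon
  obtain ⟨a, ha⟩ := hs
  obtain ⟨b, hb⟩ := ht
  have hall : ∀ x ∈ s ∪ t, x = b := fun x hx => (mem_union.1 hx).elim
    (fun hx => hcon x hx b hb) (fun hx => (hcon a ha x hx).symm.trans (hcon a ha b hb))
  have := card_le_one.2 fun x hx y hy => (hall x hx).trans (hall y hy).symm
  omega

section PathNbhd

variable {n m : ℕ} {S : Finset ℕ}

/-- The closed neighbourhood of `S` in the path graph `0 — 1 — ⋯ — (n - 1)`. -/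
def pathNbhd (n : ℕ) (S : Finset ℕ) : Finset ℕ :=
  (range n).filter fun m => ∃ s ∈ S, m ≤ s + 1 ∧ s ≤ m + 1

theorem mem_pathNbhd : m ∈ pathNbhd n S ↔ m < n ∧ ∃ s ∈ S, m ≤ s + 1 ∧ s ≤ m + 1 := by
  simp [pathNbhd]

theorem pathNbhd_subset_range : pathNbhd n S ⊆ range n := filter_subset _ _

theorem subset_pathNbhd (hS : S ⊆ range n) : S ⊆ pathNbhd n S := fun m hm =>
  mem_pathNbhd.2 ⟨mem_range.1 (hS hm), m, hm, by omega, by omega⟩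

theorem mem_pathNbhd_of_succ_mem (hS : S ⊆ range n) (h : m + 1 ∈ S) : m ∈ pathNbhd n S :=
  mem_pathNbhd.2 ⟨by have := mem_range.1 (hS h); omega, m + 1, h, by omega, by omega⟩

theorem succ_mem_pathNbhd (h : m ∈ S) (hm : m + 1 < n) : m + 1 ∈ pathNbhd n S :=
  mem_pathNbhd.2 ⟨hm, m, h, by omega, by omega⟩

theorem card_lt_card_pathNbhd (hS : S.Nonempty) (hSn : S ⊆ range n)
    (hfull : pathNbhd n S ≠ range n) : #S < #(pathNbhd n S) := by
  have hne : S ≠ range n := fun h =>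
    hfull (Subset.antisymm pathNbhd_subset_range (h ▸ subset_pathNbhd hSn))
  obtain ⟨x, hxn, hxS⟩ := (ssubset_iff_of_subset hSn).1 (ssubset_of_subset_of_ne hSn hne)
  obtain ⟨s, hs⟩ := hS
  have hx : x < n := mem_range.1 hxn
  suffices ∃ z ∈ pathNbhd n S, z ∉ S from
    card_lt_card ((ssubset_iff_of_subset (subset_pathNbhd hSn)).2 this)
  rcases lt_or_gt_of_ne (show x ≠ s by rintro rfl; exact hxS hs) with h | h
  · obtain ⟨z, -, -, hz, hz1⟩ := Nat.exists_not_and_succ_of_le h.le hxS hs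
    exact ⟨z, mem_pathNbhd_of_succ_mem hSn hz1, hz⟩
  · obtain ⟨z, -, hzx, hz, hz1⟩ :=
      Nat.exists_not_and_succ_of_le (P := (· ∉ S)) h.le (not_not.2 hs) hxS
    exact ⟨z + 1, succ_mem_pathNbhd (not_not.1 hz) (by omega), hz1⟩

theorem pathNbhd_growth (hS : S.Nonempty) (hSn : S ⊆ range n) (hfull : pathNbhd n S ≠ range n) :
    #S + 2 ≤ #(pathNbhd n S) ∨ (∃ k, S = range k) ∨ ∃ k, S = Ico k n := by
  set a := S.min' hS
  set b := S.max' hS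
  have ha : a ∈ S := S.min'_mem hS
  have hb : b ∈ S := S.max'_mem hS
  have hbn : b < n := mem_range.1 (hSn hb)
  have hab : a ≤ b := S.min'_le b hb
  have hlow : ∀ m ∈ S, a ≤ m := fun m hm => S.min'_le m hm
  have hhigh : ∀ m ∈ S, m ≤ b := fun m hm => S.le_max' m hm
  have grow2 : ∀ x y, x ∈ pathNbhd n S → y ∈ pathNbhd n S → x ∉ S → y ∉ S → x ≠ y →
      #S + 2 ≤ #(pathNbhd n S) := fun x y hx hy hxS hyS =>
    card_add_two_le (subset_pathNbhd hSn) (mem_sdiff.2 ⟨hx, hxS⟩) (mem_sdiff.2 ⟨hy, hyS⟩)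
  have hpred (ha0 : 0 < a) : a - 1 ∈ pathNbhd n S :=
    mem_pathNbhd_of_succ_mem hSn (by rwa [Nat.sub_add_cancel ha0])
  obtain ha0 | ha0 := Nat.eq_zero_or_pos a <;>
    obtain hb1 | hb1 : b + 1 < n ∨ b + 1 = n := by omega
  · -- `b + 1` is new; either `S = range (b + 1)` or a gap below `b` gives a second new point
    by_cases hgap : ∃ x ≤ b, x ∉ S
    · obtain ⟨x, hxb, hxS⟩ := hgap
      obtain ⟨z, -, hzb, hz, hz1⟩ := Nat.exists_not_and_succ_of_le hxb hxS hb
      exact Or.inl (grow2 z (b + 1) (mem_pathNbhd_of_succ_mem hSn hz1) (succ_mem_pathNbhd hb hb1)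
        hz (fun h => by have := hhigh _ h; omega) (by omega))
    · push Not at hgap
      refine Or.inr (Or.inl ⟨b + 1, ext fun m => ⟨fun hm => ?_, fun hm => hgap m ?_⟩⟩)
      · have := hhigh m hm; exact mem_range.2 (by omega)
      · have := mem_range.1 hm; omega
  · -- `S` contains both ends, so a point `c` outside the neighbourhood has a new point on each side
    obtain ⟨c, hcn, hc⟩ := (ssubset_iff_of_subset pathNbhd_subset_range).1
      (ssubset_of_subset_of_ne pathNbhd_subset_range hfull)
    have hcS : c ∉ S := fun h => hc (subset_pathNbhd hSn h)
    have hcn' : c < n := mem_range.1 hcn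
    have hc0 : 0 < c := Nat.pos_of_ne_zero fun h => hcS (h ▸ ha0 ▸ ha)
    have hcb : c < b := lt_of_le_of_ne (by omega) fun h => hcS (h ▸ hb)
    obtain ⟨w, -, hwc, hw, hw1⟩ := Nat.exists_not_and_succ_of_le (P := (· ∉ S)) (Nat.zero_le c)
      (not_not.2 (ha0 ▸ ha)) hcS
    obtain ⟨z, hcz, -, hz, hz1⟩ := Nat.exists_not_and_succ_of_le hcb.le hcS hb
    have hw1N : w + 1 ∈ pathNbhd n S := succ_mem_pathNbhd (not_not.1 hw) (by omega)
    have hzN : z ∈ pathNbhd n S := mem_pathNbhd_of_succ_mem hSn hz1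
    exact Or.inl (grow2 (w + 1) z hw1N hzN hw1 hz
      fun h => hc (by rwa [show c = w + 1 by omega]))
  · exact Or.inl (grow2 (a - 1) (b + 1) (hpred ha0) (succ_mem_pathNbhd hb hb1)
      (fun h => by have := hlow _ h; omega) (fun h => by have := hhigh _ h; omega) (by omega))
  · -- `a - 1` is new; either `S = Ico a n` or a gap above `a` gives a second new point
    by_cases hgap : ∃ x, a ≤ x ∧ x < n ∧ x ∉ S
    · obtain ⟨x, hax, hxn, hxS⟩ := hgap
      obtain ⟨w, haw, hwx, hw, hw1⟩ :=
        Nat.exists_not_and_succ_of_le (P := (· ∉ S)) hax (not_not.2 ha) hxS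
      exact Or.inl (grow2 (a - 1) (w + 1) (hpred ha0) (succ_mem_pathNbhd (not_not.1 hw) (by omega))
        (fun h => by have := hlow _ h; omega) hw1 (by omega))
    · push Not at hgap
      refine Or.inr (Or.inr ⟨a, ext fun m => ⟨fun hm => ?_, fun hm => ?_⟩⟩)
      · have := hlow m hm; have := hhigh m hm; exact mem_Ico.2 ⟨by omega, by omega⟩
      · obtain ⟨h1, h2⟩ := mem_Ico.1 hm; exact hgap m h1 h2

end PathNbhd

section Reach

variable {n : ℕ} (G : ℕ → Fin n → Fin n → Prop)

noncomputable def reach (J : Finset (Fin n)) (r : ℕ) : Finset (Fin n) :=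
  (Set.toFinite (⋃ p ∈ J, influence G p r)).toFinset

variable {G} {J : Finset (Fin n)} {r : ℕ}

theorem coe_reach : (reach G J r : Set (Fin n)) = ⋃ p ∈ J, influence G p r :=
  Set.Finite.coe_toFinset _

theorem mem_reach {v : Fin n} : v ∈ reach G J r ↔ ∃ p ∈ J, v ∈ influence G p r := by
  rw [← mem_coe, coe_reach]; simp

theorem ncard_biUnion_influence : (⋃ p ∈ J, influence G p r).ncard = #(reach G J r) := by
  rw [← coe_reach, Set.ncard_coe_finset]

theorem reach_union (J₁ J₂ : Finset (Fin n)) : reach G (J₁ ∪ J₂) r = reach G J₁ r ∪ reach G J₂ r :=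
  coe_injective (by push_cast [coe_reach]; exact set_biUnion_union _ _ _)

theorem mem_influence_self (p : Fin n) : ∀ r, p ∈ influence G p r
  | 0 => rfl
  | r + 1 => Or.inl (mem_influence_self p r)

theorem subset_reach : J ⊆ reach G J r := fun p hp =>
  mem_reach.2 ⟨p, hp, mem_influence_self p r⟩

theorem reach_zero : reach G J 0 = J :=
  Subset.antisymm (fun v hv => by obtain ⟨p, hp, rfl⟩ := mem_reach.1 hv; exact hp) subset_reach

theorem mem_reach_succ {v : Fin n} :
    v ∈ reach G J (r + 1) ↔ v ∈ reach G J r ∨ ∃ q ∈ reach G J r, G (r + 1) q v := by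
  simp only [mem_reach, influence, Set.mem_union, Set.mem_ofPred_eq]
  constructor
  · rintro ⟨p, hp, hv | ⟨q, hq, hqv⟩⟩
    exacts [Or.inl ⟨p, hp, hv⟩, Or.inr ⟨q, ⟨p, hp, hq⟩, hqv⟩]
  · rintro (⟨p, hp, hv⟩ | ⟨q, ⟨p, hp, hq⟩, hqv⟩)
    exacts [⟨p, hp, Or.inl hv⟩, ⟨p, hp, Or.inr ⟨q, hq, hqv⟩⟩]

end Reach

section PathPosition

variable {n : ℕ} (σ : Fin n ≃ Fin n)

/-- The position of a process along the path `σ 0 — σ 1 — ⋯ — σ (n - 1)`. -/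
def pathPos : Fin n ↪ ℕ := σ.symm.toEmbedding.trans Fin.valEmbedding

variable {σ}

theorem pathPos_apply (v : Fin n) : pathPos σ v = σ.symm v := rfl

theorem chainEdge_iff {u v : Fin n} : chainEdge σ u v ↔ pathPos σ v = pathPos σ u + 1 := by
  constructor
  · rintro ⟨i, j, hij, rfl, rfl⟩
    simpa [pathPos_apply] using hij
  · exact fun h => ⟨σ.symm u, σ.symm v, h, by simp, by simp⟩

theorem map_pathPos_subset_range (A : Finset (Fin n)) : A.map (pathPos σ) ⊆ range n := by
  intro m hm
  obtain ⟨v, -, rfl⟩ := mem_map.1 hm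
  exact mem_range.2 (σ.symm v).isLt

theorem map_pathPos_reach_succ {G : ℕ → Fin n → Fin n → Prop} {r : ℕ}
    (hσ : ∀ u v, G (r + 1) u v ↔ chainEdge σ u v ∨ chainEdge σ v u) (J : Finset (Fin n)) :
    (reach G J (r + 1)).map (pathPos σ) = pathNbhd n ((reach G J r).map (pathPos σ)) := by
  ext m
  simp only [mem_map, mem_pathNbhd, mem_reach_succ, hσ, chainEdge_iff]
  constructor
  · rintro ⟨v, hv | ⟨q, hq, hqv⟩, rfl⟩
    · exact ⟨(σ.symm v).isLt, _, ⟨v, hv, rfl⟩, by omega, by omega⟩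
    · exact ⟨(σ.symm v).isLt, _, ⟨q, hq, rfl⟩, by omega, by omega⟩
  · rintro ⟨hm, _, ⟨q, hq, rfl⟩, h₁, h₂⟩
    refine ⟨σ ⟨m, hm⟩, ?_, by simp [pathPos_apply]⟩
    have hpos : pathPos σ (σ ⟨m, hm⟩) = m := by simp [pathPos_apply]
    rcases lt_trichotomy m (pathPos σ q) with h | h | h
    · exact Or.inr ⟨q, hq, Or.inr (by omega)⟩
    · exact Or.inl (by rwa [(pathPos σ).injective (hpos.trans h)])
    · exact Or.inr ⟨q, hq, Or.inl (by omega)⟩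

end PathPosition

section Surplus

variable {n : ℕ} {G : ℕ → Fin n → Fin n → Prop} {σ : Fin n ≃ Fin n} {seg : ℕ → Finset ℕ}
  {K J : Finset (Fin n)} {r : ℕ}

def HasSurplus (G : ℕ → Fin n → Fin n → Prop) (K : Finset (Fin n)) (r : ℕ) : Prop :=
  ∀ J ⊆ K, J.Nonempty → #J + 2 * r ≤ #(reach G J r)

def IsTightSegment (G : ℕ → Fin n → Fin n → Prop) (σ : Fin n ≃ Fin n) (seg : ℕ → Finset ℕ)
    (r : ℕ) (J : Finset (Fin n)) : Prop :=
  #(reach G J r) = #J + 2 * r ∧ ∃ k, (reach G J r).map (pathPos σ) = seg k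

theorem hasSurplus_univ_zero : HasSurplus G univ 0 := fun J _ _ => by simp [reach_zero]

theorem HasSurplus.subset_of_reach_subset (hK : HasSurplus G K r) {J₁ J₂ : Finset (Fin n)}
    (h₁ : J₁ ⊆ K) (h₂ : J₂ ⊆ K) (hne : J₁.Nonempty) (htight : #(reach G J₂ r) = #J₂ + 2 * r)
    (hsub : reach G J₁ r ⊆ reach G J₂ r) : J₁ ⊆ J₂ := by
  have hunion := hK (J₁ ∪ J₂) (union_subset h₁ h₂) (hne.mono subset_union_left)
  rw [reach_union, union_eq_right.2 hsub, htight] at hunion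
  exact union_eq_right.1 (eq_of_subset_of_card_le subset_union_right (by omega)).symm

theorem HasSurplus.exists_least_isTightSegment (hK : HasSurplus G K r)
    (hseg : ∀ k₁ k₂, seg k₁ ⊆ seg k₂ ∨ seg k₂ ⊆ seg k₁)
    (hex : ∃ J ⊆ K, J.Nonempty ∧ IsTightSegment G σ seg r J) :
    ∃ L ⊆ K, L.Nonempty ∧ IsTightSegment G σ seg r L ∧
      ∀ J ⊆ K, J.Nonempty → IsTightSegment G σ seg r J → L ⊆ J := by
  classical
  set T := K.powerset.filter fun J => J.Nonempty ∧ IsTightSegment G σ seg r J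
  have memT : ∀ {J}, J ∈ T ↔ J ⊆ K ∧ J.Nonempty ∧ IsTightSegment G σ seg r J := by
    simp [T]
  obtain ⟨L, hLT, hLmin⟩ := T.exists_min_image card
    (by obtain ⟨J, hJK, hJ⟩ := hex; exact ⟨J, memT.2 ⟨hJK, hJ⟩⟩)
  obtain ⟨hLK, hL, hLt⟩ := memT.1 hLT
  refine ⟨L, hLK, hL, hLt, fun J hJK hJ hJt => ?_⟩
  obtain ⟨kL, hkL⟩ := hLt.2
  obtain ⟨kJ, hkJ⟩ := hJt.2
  rcases hseg kL kJ with h | h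
  · exact hK.subset_of_reach_subset hLK hJK hL hJt.1 (map_subset_map.1 (hkL ▸ hkJ ▸ h))
  · have hJL := hK.subset_of_reach_subset hJK hLK hJ hLt.1 (map_subset_map.1 (hkL ▸ hkJ ▸ h))
    exact (eq_of_subset_of_card_le hJL (hLmin J (memT.2 ⟨hJK, hJ, hJt⟩))).symm.subset

theorem HasSurplus.exists_subset_forall_isTightSegment (hK : HasSurplus G K r)
    (hKne : K.Nonempty) (hseg : ∀ k₁ k₂, seg k₁ ⊆ seg k₂ ∨ seg k₂ ⊆ seg k₁) :
    ∃ L ⊆ K, L.Nonempty ∧ (L = K ∨ IsTightSegment G σ seg r L) ∧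
      ∀ J ⊆ K, J.Nonempty → IsTightSegment G σ seg r J → L ⊆ J := by
  by_cases hex : ∃ J ⊆ K, J.Nonempty ∧ IsTightSegment G σ seg r J
  · obtain ⟨L, hLK, hL, hLt, hmin⟩ := hK.exists_least_isTightSegment hseg hex
    exact ⟨L, hLK, hL, Or.inr hLt, hmin⟩
  · push Not at hex
    exact ⟨K, Subset.rfl, hKne, Or.inl rfl, fun J hJK hJ hJt => absurd hJt (hex J hJK hJ)⟩

theorem card_add_eq_of_isTightSegment_range_Ico (hJ : J.Nonempty)
    (hP : IsTightSegment G σ range r J) (hS : IsTightSegment G σ (Ico · n) r J) :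
    #J + 2 * r = n := by
  obtain ⟨k, hk⟩ := hP.2
  obtain ⟨k', hk'⟩ := hS.2
  have h0 : 0 ∈ (reach G J r).map (pathPos σ) := by
    obtain ⟨m, hm⟩ := (hJ.mono subset_reach).map (f := pathPos σ)
    rw [hk, mem_range] at hm ⊢
    omega
  rw [hk', mem_Ico] at h0
  rw [← hP.1, ← card_map (pathPos σ), hk', Nat.card_Ico]
  omega

theorem HasSurplus.exists_ne_mem_isTightSegment (hK : HasSurplus G K r) (hKn : #K + 2 * r ≤ n)
    (hK2 : 2 ≤ #K) (σ : Fin n ≃ Fin n) :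
    ∃ xL ∈ K, ∃ xR ∈ K, xL ≠ xR ∧
      (∀ J ⊆ K, J.Nonempty → IsTightSegment G σ range r J → xL ∈ J) ∧
      (∀ J ⊆ K, J.Nonempty → IsTightSegment G σ (Ico · n) r J → xR ∈ J) := by
  classical
  have hKne : K.Nonempty := card_pos.1 (by omega)
  obtain ⟨L, hLK, hL, hLt, hLmin⟩ := hK.exists_subset_forall_isTightSegment (σ := σ) hKne
    fun k₁ k₂ => (le_total k₁ k₂).imp range_subset_range.2 range_subset_range.2
  obtain ⟨R, hRK, hR, hRt, hRmin⟩ := hK.exists_subset_forall_isTightSegment (σ := σ)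
    (seg := (Ico · n)) hKne fun k₁ k₂ =>
      (le_total k₂ k₁).imp Ico_subset_Ico_left Ico_subset_Ico_left
  have h2 : 2 ≤ #(L ∪ R) := by
    rcases hLt with rfl | hLt
    · exact hK2.trans (card_le_card subset_union_left)
    rcases hRt with rfl | hRt
    · exact hK2.trans (card_le_card subset_union_right)
    -- otherwise `L = R` is a single process tight at both ends, so it reaches all `n` processes
    by_contra! h
    have hLcard := card_le_card (subset_union_left : L ⊆ L ∪ R)
    have hL_eq := eq_of_subset_of_card_le (subset_union_left : L ⊆ L ∪ R)
      (by have := hL.card_pos; omega)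
    have hR_eq := eq_of_subset_of_card_le (subset_union_right : R ⊆ L ∪ R)
      (by have := hR.card_pos; omega)
    have := card_add_eq_of_isTightSegment_range_Ico hL hLt (hL_eq.trans hR_eq.symm ▸ hRt)
    omega
  obtain ⟨xL, hxL, xR, hxR, hne⟩ := exists_ne_of_two_le_card_union hL hR h2
  exact ⟨xL, hLK hxL, xR, hRK hxR, hne, fun J hJK hJ hJt => hLmin J hJK hJ hJt hxL,
    fun J hJK hJ hJt => hRmin J hJK hJ hJt hxR⟩

theorem card_reach_succ_of_not_isTightSegment
    (hσ : ∀ u v, G (r + 1) u v ↔ chainEdge σ u v ∨ chainEdge σ v u) (hJ : J.Nonempty)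
    (hlow : #J + 2 * r ≤ #(reach G J r)) (hn : #J + 2 * (r + 1) ≤ n)
    (hP : ¬ IsTightSegment G σ range r J) (hS : ¬ IsTightSegment G σ (Ico · n) r J) :
    #J + 2 * (r + 1) ≤ #(reach G J (r + 1)) := by
  set A := (reach G J r).map (pathPos σ)
  have hA : #A = #(reach G J r) := card_map _
  have hnext : #(reach G J (r + 1)) = #(pathNbhd n A) := by
    rw [← map_pathPos_reach_succ hσ, card_map]
  have hAne : A.Nonempty := (hJ.mono subset_reach).map
  have hAn : A ⊆ range n := map_pathPos_subset_range _
  by_cases hfull : pathNbhd n A = range n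
  · rw [hnext, hfull, card_range]
    omega
  have hlt := card_lt_card_pathNbhd hAne hAn hfull
  rcases pathNbhd_growth hAne hAn hfull with h2 | ⟨k, hk⟩ | ⟨k, hk⟩
  · omega
  · have : #(reach G J r) ≠ #J + 2 * r := fun h => hP ⟨h, k, hk⟩
    omega
  · have : #(reach G J r) ≠ #J + 2 * r := fun h => hS ⟨h, k, hk⟩
    omega

theorem HasSurplus.exists_succ (hK : HasSurplus G K r) (hKn : #K + 2 * r ≤ n) (hK2 : 2 ≤ #K)
    (hσ : ∀ u v, G (r + 1) u v ↔ chainEdge σ u v ∨ chainEdge σ v u) :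
    ∃ K', #K' + 2 = #K ∧ HasSurplus G K' (r + 1) := by
  classical
  obtain ⟨xL, hxL, xR, hxR, hne, hL, hR⟩ := hK.exists_ne_mem_isTightSegment hKn hK2 σ
  have hcard : #((K.erase xL).erase xR) + 2 = #K := by
    rw [card_erase_of_mem (mem_erase.2 ⟨hne.symm, hxR⟩), card_erase_of_mem hxL]
    omega
  refine ⟨(K.erase xL).erase xR, hcard, fun J hJ hJne => ?_⟩
  have hJK : J ⊆ K := hJ.trans ((erase_subset _ _).trans (erase_subset _ _))
  have hJcard := card_le_card hJ
  refine card_reach_succ_of_not_isTightSegment hσ hJne (hK J hJK hJne) (by omega)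
    (fun h => ?_) (fun h => ?_)
  · exact notMem_erase xL K (mem_erase.1 (hJ (hL J hJK hJne h))).2
  · exact (mem_erase.1 (hJ (hR J hJK hJne h))).1 rfl

theorem exists_hasSurplus (hpath : ∀ t, 1 ≤ t → IsUndirPath (G t)) :
    ∀ r, 2 * r ≤ n - 1 → ∃ K, #K = n - 2 * r ∧ HasSurplus G K r
  | 0, _ => ⟨univ, by simp, hasSurplus_univ_zero⟩
  | r + 1, hr => by
    obtain ⟨K, hK, hKs⟩ := exists_hasSurplus hpath r (by omega)
    obtain ⟨σ, hσ⟩ := hpath (r + 1) (by omega)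
    obtain ⟨K', hK', hK's⟩ := hKs.exists_succ (by omega) (by omega) hσ
    exact ⟨K', by omega, hK's⟩

end Surplus

theorem undirected_paths_influence_structure_general {n : ℕ}
    (G : ℕ → Fin n → Fin n → Prop)
    (hpath : ∀ t, 1 ≤ t → IsUndirPath (G t))
    (r : ℕ) (hr : 2 * r ≤ n - 1) :
    ∃ ps : Fin (n - 2 * r) → Fin n, Function.Injective ps ∧
      (∀ i, 2 * r + 1 ≤ (influence G (ps i) r).ncard) ∧
      ∀ I : Finset (Fin (n - 2 * r)), I.Nonempty →
        2 * r + I.card ≤ (⋃ i ∈ I, influence G (ps i) r).ncard := by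
  classical
  obtain ⟨K, hK, hKs⟩ := exists_hasSurplus hpath r hr
  let ps := K.orderEmbOfFin hK
  have hunion : ∀ I : Finset (Fin (n - 2 * r)), I.Nonempty →
      2 * r + #I ≤ (⋃ i ∈ I, influence G (ps i) r).ncard := by
    intro I hI
    rw [← set_biUnion_finset_image (f := ps) (g := (influence G · r)), ncard_biUnion_influence]
    have := hKs (I.image ps) (image_subset_iff.2 fun i _ => K.orderEmbOfFin_mem hK i) (hI.image _)
    rwa [card_image_of_injective _ ps.injective, add_comm] at this
  refine ⟨ps, ps.injective, fun i => ?_, hunion⟩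
  simpa using hunion {i} (singleton_nonempty i)

/-- for any sequence of undirected paths on `n ≥ 1` nodes and
any `r ≤ (n-1)/2` (i.e. `2r ≤ n - 1`), there are `n - 2r` influence sets at
time `r`, each of size at least `2r + 1`, such that the union of any `|I|`
of them has size at least `2r + |I|`. -/
theorem undirected_paths_influence_structure {n : ℕ} (hn : 1 ≤ n)
    (G : ℕ → Fin n → Fin n → Prop)
    (hpath : ∀ t, 1 ≤ t → IsUndirPath (G t))
    (r : ℕ) (hr : 2 * r ≤ n - 1) :
    ∃ ps : Fin (n - 2 * r) → Fin n, Function.Injective ps ∧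
      (∀ i, 2 * r + 1 ≤ (influence G (ps i) r).ncard) ∧
      ∀ I : Finset (Fin (n - 2 * r)), I.Nonempty →
        2 * r + I.card ≤ (⋃ i ∈ I, influence G (ps i) r).ncard :=
  undirected_paths_influence_structure_general G hpath r hr
end
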